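/- For any matrix G ∈ ℝ^{m×n} and strictly positive vectors r ∈ ℝᵐ, s ∈ ℝⁿ with S := 1_mᵀr = 1_nᵀs and S ≥ (r_i + s_j)/2 for all i,j, it holds that Σ_i (G1_n)_i²/(2n√r_i) + Σ_j (Gᵀ1_m)_j²/(2m√s_j) ≤ Σ_{i,j} G_{ij}² √S/√(r_i s_j). -/

import Mathlib

/-!
By Cauchy–Schwarz, `(Σ_j G_ij)² / (2n√r_i) ≤ Σ_j G_ij² / (2√r_i)`, and likewise for columns.
Adding the two bounds, the coefficient of `G_ij²` is `1/(2√r_i) + 1/(2√s_j)`, which is at most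
`√S/√(r_i s_j)` as soon as `(r_i + s_j)/2 ≤ S`.
-/

open Finset

/-- Clearing denominators, this is `√a + √b ≤ 2 √S`, which holds because
`(√a + √b) ^ 2 ≤ 2 (a + b) ≤ 4 S`. -/
lemma inv_two_sqrt_add_inv_two_sqrt_le {a b S : ℝ} (ha : 0 < a) (hb : 0 < b)
    (hS : (a + b) / 2 ≤ S) :
    1 / (2 * √a) + 1 / (2 * √b) ≤ √S / √(a * b) := by
  have hx : 0 < √a := Real.sqrt_pos.mpr ha
  have hy : 0 < √b := Real.sqrt_pos.mpr hb
  have hS' : √S ^ 2 = S := Real.sq_sqrt (le_trans (by positivity) hS)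
  have hsum : √a + √b ≤ 2 * √S := by
    nlinarith [sq_nonneg (√a - √b), Real.sq_sqrt ha.le, Real.sq_sqrt hb.le, Real.sqrt_nonneg S]
  rw [Real.sqrt_mul ha.le]
  calc 1 / (2 * √a) + 1 / (2 * √b) = (√a + √b) / 2 / (√a * √b) := by field_simp; ring
    _ ≤ 2 * √S / 2 / (√a * √b) := by gcongr
    _ = √S / (√a * √b) := by ring

lemma sq_div_two_sqrt_add_sq_div_two_sqrt_le {a b S : ℝ} (x : ℝ) (ha : 0 < a) (hb : 0 < b)
    (hS : (a + b) / 2 ≤ S) :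
    x ^ 2 / (2 * √a) + x ^ 2 / (2 * √b) ≤ x ^ 2 * √S / √(a * b) := by
  calc x ^ 2 / (2 * √a) + x ^ 2 / (2 * √b) = x ^ 2 * (1 / (2 * √a) + 1 / (2 * √b)) := by ring
    _ ≤ x ^ 2 * (√S / √(a * b)) := by
      gcongr
      exact inv_two_sqrt_add_inv_two_sqrt_le ha hb hS
    _ = x ^ 2 * √S / √(a * b) := by ring

lemma sq_sum_div_card_mul_le {ι : Type*} [Fintype ι] (f : ι → ℝ) {c : ℝ} (hc : 0 ≤ c) :
    (∑ i, f i) ^ 2 / (Fintype.card ι * c) ≤ ∑ i, f i ^ 2 / c := by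
  have hcs : (∑ i, f i) ^ 2 ≤ Fintype.card ι * ∑ i, f i ^ 2 := by
    simpa using sq_sum_le_card_mul_sum_sq (s := univ) (f := f)
  calc (∑ i, f i) ^ 2 / (Fintype.card ι * c)
      ≤ Fintype.card ι * (∑ i, f i ^ 2) / (Fintype.card ι * c) := by gcongr
    _ = (Fintype.card ι / Fintype.card ι : ℝ) * ((∑ i, f i ^ 2) / c) := mul_div_mul_comm _ _ _ _
    _ ≤ (∑ i, f i ^ 2) / c :=
      mul_le_of_le_one_left (by positivity) (div_self_le_one _)
    _ = ∑ i, f i ^ 2 / c := sum_div _ _ _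

lemma sq_sum_fin_div_le {n : ℕ} (f : Fin n → ℝ) (c : ℝ) :
    (∑ i, f i) ^ 2 / (2 * n * √c) ≤ ∑ i, f i ^ 2 / (2 * √c) := by
  have h := sq_sum_div_card_mul_le f (c := 2 * √c) (by positivity)
  rwa [Fintype.card_fin, ← mul_assoc, mul_comm (n : ℝ)] at h

theorem stmt_10_general (m n : ℕ)
    (G : Matrix (Fin m) (Fin n) ℝ)
    (r : Fin m → ℝ) (s : Fin n → ℝ)
    (hr : ∀ i, 0 < r i) (hs : ∀ j, 0 < s j)
    (hSbig : ∀ i j, (r i + s j) / 2 ≤ ∑ i', r i') :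
    ∑ i, (∑ j, G i j) ^ 2 / (2 * n * Real.sqrt (r i))
      + ∑ j, (∑ i, G i j) ^ 2 / (2 * m * Real.sqrt (s j))
    ≤ ∑ i, ∑ j, (G i j) ^ 2 * Real.sqrt (∑ i', r i') / Real.sqrt (r i * s j) := by
  calc ∑ i, (∑ j, G i j) ^ 2 / (2 * n * √(r i)) + ∑ j, (∑ i, G i j) ^ 2 / (2 * m * √(s j))
      ≤ ∑ i, ∑ j, G i j ^ 2 / (2 * √(r i)) + ∑ j, ∑ i, G i j ^ 2 / (2 * √(s j)) :=
        add_le_add (sum_le_sum fun i _ => sq_sum_fin_div_le _ _)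
          (sum_le_sum fun j _ => sq_sum_fin_div_le _ _)
    _ = ∑ i, ∑ j, (G i j ^ 2 / (2 * √(r i)) + G i j ^ 2 / (2 * √(s j))) := by
        rw [sum_comm (f := fun j i => G i j ^ 2 / (2 * √(s j))), ← sum_add_distrib]
        simp only [sum_add_distrib]
    _ ≤ ∑ i, ∑ j, G i j ^ 2 * √(∑ i', r i') / √(r i * s j) :=
        sum_le_sum fun i _ => sum_le_sum fun j _ =>
          sq_div_two_sqrt_add_sq_div_two_sqrt_le _ (hr i) (hs j) (hSbig i j)

/-- For `G ∈ ℝ^{m×n}` and positive vectors `r, s` with `S = Σr = Σs` and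
`S ≥ (r_i+s_j)/2`, one has
`Σ_i (G1_n)_i²/(2n√r_i) + Σ_j (Gᵀ1_m)_j²/(2m√s_j) ≤ Σ_{ij} G_{ij}²√S/√(r_i s_j)`. -/
theorem stmt_10 (m n : ℕ) (hm : 0 < m) (hn : 0 < n)
    (G : Matrix (Fin m) (Fin n) ℝ)
    (r : Fin m → ℝ) (s : Fin n → ℝ)
    (hr : ∀ i, 0 < r i) (hs : ∀ j, 0 < s j)
    (hsym : ∑ i, r i = ∑ j, s j)
    (hSbig : ∀ i j, (r i + s j) / 2 ≤ ∑ i', r i') :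
    ∑ i, (∑ j, G i j) ^ 2 / (2 * n * Real.sqrt (r i))
      + ∑ j, (∑ i, G i j) ^ 2 / (2 * m * Real.sqrt (s j))
    ≤ ∑ i, ∑ j, (G i j) ^ 2 * Real.sqrt (∑ i', r i') / Real.sqrt (r i * s j) :=
  stmt_10_general m n G r s hr hs hSbig
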